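/- Guessing probability bound from min-entropy: for a cq-state ρ_AB = Σ_a p(a)|a⟩⟨a|_A ⊗ ρ_B^a with H_min(A|B)_ρ ≥ k, every POVM {M_a} on B satisfies Σ_a p(a) tr(M_a ρ_B^a) ≤ 2^{-k}. -/

import Mathlib

open Matrix Kronecker BigOperators Finset
open scoped ComplexOrder

/-- Trace distance: half the trace norm of the difference. -/
noncomputable def traceDist {d : Type*} [Fintype d] [DecidableEq d]
    (ρ σ : Matrix d d ℂ) : ℝ :=
  let h := (Matrix.posSemidef_conjTranspose_mul_self (ρ - σ)).1
  (((h.eigenvectorUnitary : Matrix d d ℂ) *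
    diagonal (fun i => ((Real.sqrt (h.eigenvalues i) : ℝ) : ℂ)) *
    (star h.eigenvectorUnitary : Matrix d d ℂ)).trace).re / 2

/-- A density operator: positive semidefinite with unit trace. -/
def IsDensity {d : Type*} [Fintype d] [DecidableEq d] (ρ : Matrix d d ℂ) : Prop :=
  ρ.PosSemidef ∧ ρ.trace = 1

/-- Rank-one projection `|v⟩⟨v|` onto a vector. -/
def proj {d : Type*} [Fintype d] [DecidableEq d] (v : d → ℂ) : Matrix d d ℂ :=
  Matrix.vecMulVec v (star v)

/-- A unit vector. -/
def IsUnit' {d : Type*} [Fintype d] (v : d → ℂ) : Prop :=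
  dotProduct (star v) v = 1

/-- Partial trace over the second tensor factor. -/
noncomputable def ptraceY {X Y : Type*} [Fintype X] [Fintype Y] [DecidableEq X] [DecidableEq Y]
    (ρ : Matrix (X × Y) (X × Y) ℂ) : Matrix X X ℂ :=
  fun x x' => ∑ y : Y, ρ (x, y) (x', y)

/-- Conditional quantum min-entropy:
`H_min(A|B)_ρ = -inf_{σ_B density} inf {λ : ρ_AB ≤ 2^λ I_A ⊗ σ_B}`. -/
noncomputable def condMinEntropy {A B : Type*} [Fintype A] [Fintype B]
    [DecidableEq A] [DecidableEq B] (ρ : Matrix (A × B) (A × B) ℂ) : ℝ :=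
  - sInf {lam : ℝ | ∃ σ : Matrix B B ℂ, IsDensity σ ∧
      (((2 : ℝ) ^ lam • ((1 : Matrix A A ℂ) ⊗ₖ σ)) - ρ).PosSemidef}

/-- A cq-state `Σ_a p(a) |a⟩⟨a| ⊗ ρ_B^a`. -/
noncomputable def cqState {A B : Type*} [Fintype A] [Fintype B]
    [DecidableEq A] [DecidableEq B]
    (p : A → ℝ) (ρB : A → Matrix B B ℂ) : Matrix (A × B) (A × B) ℂ :=
  ∑ a : A, (p a : ℂ) • (proj (fun x => if x = a then 1 else 0) ⊗ₖ ρB a)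

/-!
If `2^λ (1 ⊗ σ) - ρ_AB` is positive semidefinite for a density operator `σ`, pairing it with the
positive operator `∑_a |a⟩⟨a| ⊗ M_a` gives `0 ≤ 2^λ tr σ - ∑_a p(a) tr(M_a ρ_B^a)`. So the guessing
probability is at most `2^λ` for every feasible `λ`, hence at most `2^{-H_min(A|B)}`.
-/

open scoped MatrixOrder

theorem Matrix.PosSemidef.trace_mul_nonneg {n 𝕜 : Type*} [Fintype n] [DecidableEq n] [RCLike 𝕜]
    {X Y : Matrix n n 𝕜} (hX : X.PosSemidef) (hY : Y.PosSemidef) : 0 ≤ (X * Y).trace := by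
  obtain ⟨b, rfl⟩ := CStarAlgebra.nonneg_iff_eq_star_mul_self.mp hY.nonneg
  rw [star_eq_conjTranspose, ← Matrix.mul_assoc, trace_mul_cycle]
  exact (hX.mul_mul_conjTranspose_same b).trace_nonneg

theorem le_rpow_csInf {b x : ℝ} (hb : 1 < b) {S : Set ℝ} (hS : S.Nonempty)
    (h : ∀ t ∈ S, x ≤ b ^ t) : x ≤ b ^ sInf S := by
  rcases le_or_gt x 0 with hx | hx
  · exact hx.trans (Real.rpow_pos_of_pos (by linarith) _).le
  · have hlog : Real.logb b x ≤ sInf S :=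
      le_csInf hS fun t ht => (Real.logb_le_iff_le_rpow hb hx).mpr (h t ht)
    calc x = b ^ Real.logb b x := (Real.rpow_logb (by linarith) hb.ne' hx).symm
      _ ≤ b ^ sInf S := Real.rpow_le_rpow_of_exponent_le hb.le hlog

section CqState

variable {A B : Type*} [Fintype A] [Fintype B] [DecidableEq B]

def guessProb (p : A → ℝ) (ρB M : A → Matrix B B ℂ) : ℝ :=
  ∑ a, p a * ((M a * ρB a).trace).re

variable {M : A → Matrix B B ℂ}

theorem guessProb_le_one {p : A → ℝ} (hp : ∀ a, 0 ≤ p a) (hp1 : ∑ a, p a = 1)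
    {ρB : A → Matrix B B ℂ} (hρB : ∀ a, IsDensity (ρB a))
    (hM : ∀ a, (M a).PosSemidef) (hM1 : ∑ a, M a = 1) : guessProb p ρB M ≤ 1 := by
  rw [← hp1]
  refine sum_le_sum fun a _ => mul_le_of_le_one_right (hp a) ?_
  have hMa : M a ≤ 1 := hM1 ▸ single_le_sum (fun b _ => (hM b).nonneg) (mem_univ a)
  have := (Complex.nonneg_iff.mp ((le_iff.mp hMa).trace_mul_nonneg (hρB a).1)).1
  rwa [Matrix.sub_mul, Matrix.one_mul, trace_sub, (hρB a).2, Complex.sub_re, Complex.one_re,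
    sub_nonneg] at this

variable [DecidableEq A]

theorem proj_indicator_eq_single (a : A) :
    proj (fun x => if x = a then (1 : ℂ) else 0) = single a a 1 := by
  ext i j
  simp only [proj, vecMulVec_apply, single_apply, Pi.star_apply]
  split_ifs <;> aesop

theorem cqState_eq_sum_single (p : A → ℝ) (ρB : A → Matrix B B ℂ) :
    cqState p ρB = ∑ a, (p a : ℂ) • (single a a 1 ⊗ₖ ρB a) := by
  simp only [cqState, proj_indicator_eq_single]

theorem cqState_posSemidef {p : A → ℝ} (hp : ∀ a, 0 ≤ p a) {ρB : A → Matrix B B ℂ}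
    (hρB : ∀ a, (ρB a).PosSemidef) : (cqState p ρB).PosSemidef := by
  refine posSemidef_sum _ fun a _ =>
    ((posSemidef_vecMulVec_self_star _).kronecker (hρB a)).smul ?_
  exact_mod_cast hp a

theorem trace_cqState_mul_cqState (q p : A → ℝ) (N ρB : A → Matrix B B ℂ) :
    (cqState q N * cqState p ρB).trace = ∑ a, (q a * p a : ℂ) * (N a * ρB a).trace := by
  simp only [cqState_eq_sum_single, sum_mul, mul_sum, smul_mul_smul_comm, ← mul_kronecker_mul,
    trace_sum, trace_smul, trace_kronecker]
  simp [trace_single_mul, single_apply]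

theorem trace_cqState_mul_one_kronecker (q : A → ℝ) (N : A → Matrix B B ℂ) (σ : Matrix B B ℂ) :
    (cqState q N * ((1 : Matrix A A ℂ) ⊗ₖ σ)).trace = ((∑ a, (q a : ℂ) • N a) * σ).trace := by
  simp only [cqState_eq_sum_single, sum_mul, smul_mul_assoc, ← mul_kronecker_mul, trace_sum,
    trace_smul, trace_kronecker, Matrix.mul_one, trace_single_eq_same, one_mul]

theorem guessProb_le_of_posSemidef_smul_sub (p : A → ℝ) (ρB : A → Matrix B B ℂ)
    (hM : ∀ a, (M a).PosSemidef) (hM1 : ∑ a, M a = 1) {σ : Matrix B B ℂ} (hσ : σ.trace = 1)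
    {c : ℝ} (h : (c • ((1 : Matrix A A ℂ) ⊗ₖ σ) - cqState p ρB).PosSemidef) :
    guessProb p ρB M ≤ c := by
  -- `cqState 1 M = ∑ a, |a⟩⟨a| ⊗ M a` is the measurement operator paired against `h`.
  have hN : (cqState 1 M).PosSemidef := cqState_posSemidef (fun _ => zero_le_one) hM
  have key : (cqState 1 M * (c • ((1 : Matrix A A ℂ) ⊗ₖ σ) - cqState p ρB)).trace
      = c - ∑ a, (p a : ℂ) * (M a * ρB a).trace := by
    rw [Matrix.mul_sub, trace_sub, Matrix.mul_smul, trace_smul, trace_cqState_mul_one_kronecker,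
      trace_cqState_mul_cqState]
    simp [hM1, hσ]
  have := (Complex.nonneg_iff.mp (hN.trace_mul_nonneg h)).1
  rw [key, Complex.sub_re, Complex.ofReal_re, Complex.re_sum] at this
  simpa [guessProb, Complex.re_ofReal_mul] using this

theorem guessProb_le_rpow_neg_condMinEntropy {p : A → ℝ} (hp : ∀ a, 0 ≤ p a)
    (hp1 : ∑ a, p a = 1) {ρB : A → Matrix B B ℂ} (hρB : ∀ a, IsDensity (ρB a))
    (hM : ∀ a, (M a).PosSemidef) (hM1 : ∑ a, M a = 1) :
    guessProb p ρB M ≤ (2 : ℝ) ^ (-condMinEntropy (cqState p ρB)) := by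
  rw [condMinEntropy, neg_neg]
  -- An empty feasible set has junk `sInf = 0`; `guessProb ≤ 1` covers that case.
  rcases Set.eq_empty_or_nonempty {lam : ℝ | ∃ σ : Matrix B B ℂ, IsDensity σ ∧
      (((2 : ℝ) ^ lam • ((1 : Matrix A A ℂ) ⊗ₖ σ)) - cqState p ρB).PosSemidef} with hS | hS
  · rw [hS, Real.sInf_empty, Real.rpow_zero]
    exact guessProb_le_one hp hp1 hρB hM hM1
  · refine le_rpow_csInf one_lt_two hS ?_
    rintro lam ⟨σ, hσ, h⟩
    exact guessProb_le_of_posSemidef_smul_sub p ρB hM hM1 hσ.2 h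

end CqState

/-- Guessing probability bound from min-entropy: if `H_min(A|B)_ρ ≥ k` for a
cq-state, then every POVM on `B` guesses `A` with probability at most `2^{-k}`. -/
theorem guessing_prob_le_of_minEntropy
    {A B : Type*} [Fintype A] [Fintype B] [DecidableEq A] [DecidableEq B]
    (p : A → ℝ) (hp : ∀ a, 0 ≤ p a) (hp1 : ∑ a, p a = 1)
    (ρB : A → Matrix B B ℂ) (hρB : ∀ a, IsDensity (ρB a))
    (k : ℝ) (hk : k ≤ condMinEntropy (cqState p ρB))
    (M : A → Matrix B B ℂ) (hM : ∀ a, (M a).PosSemidef) (hM1 : ∑ a, M a = 1) :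
    ∑ a, p a * ((M a * ρB a).trace).re ≤ (2 : ℝ) ^ (-k) :=
  (guessProb_le_rpow_neg_condMinEntropy hp hp1 hρB hM hM1).trans
    (Real.rpow_le_rpow_of_exponent_le one_le_two (neg_le_neg hk))
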